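/- arXiv:2212.05264 — 4 statements merged into one kernel-verified Lean document; each statement's English description precedes it below -/
import Mathlib

section
/- Let a : ℝ → ℝ be continuous on [0,1] and continuously differentiable on (0,1], with a(0) = 0 and a > 0 on (0,1], and suppose K := sup_{x ∈ (0,1]} x·|a'(x)|/a(x) is finite. Then for every γ ≥ K the function x ↦ x^γ/a(x) is nondecreasing on (0,1], and for every γ > K one has lim_{x→0⁺} x^γ/a(x) = 0. -/
open MeasureTheory Set Filter Topology

/-- If `a` is continuous on `[0,1]`, continuously differentiable on `(0,1]`
(with derivative `a'`), `a 0 = 0`, `a > 0` on `(0,1]`, and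
`K = sup_{x ∈ (0,1]} x |a'(x)| / a(x)` is a finite positive real, then for every
`γ ≥ K` the map `x ↦ x^γ / a x` is nondecreasing on `(0,1]`, and for every
`γ > K` one has `x^γ / a x → 0` as `x → 0⁺`. -/
theorem stmt0 (a a' : ℝ → ℝ) (K : ℝ)
    (ha_cont : ContinuousOn a (Set.Icc 0 1))
    (ha_deriv : ∀ x ∈ Set.Ioc (0:ℝ) 1, HasDerivAt a (a' x) x)
    (ha'_cont : ContinuousOn a' (Set.Ioc 0 1))
    (ha0 : a 0 = 0)
    (hapos : ∀ x ∈ Set.Ioc (0:ℝ) 1, 0 < a x)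
    (hK : IsLUB ((fun x => x * |a' x| / a x) '' Set.Ioc (0:ℝ) 1) K)
    (hKpos : 0 < K) :
    (∀ γ : ℝ, K ≤ γ → ∀ x ∈ Set.Ioc (0:ℝ) 1, ∀ y ∈ Set.Ioc (0:ℝ) 1, x ≤ y →
        x ^ γ / a x ≤ y ^ γ / a y) ∧
    (∀ γ : ℝ, K < γ →
        Filter.Tendsto (fun x : ℝ => x ^ γ / a x) (nhdsWithin 0 (Set.Ioi 0)) (nhds 0)) := by
  have hbound : ∀ x ∈ Set.Ioc (0:ℝ) 1, x * |a' x| ≤ K * a x := by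
    intro x hx
    have h1 := hK.1 (Set.mem_image_of_mem _ hx)
    have hax := hapos x hx
    have := (div_le_iff₀ hax).mp h1
    linarith
  have hmono : ∀ γ : ℝ, K ≤ γ → ∀ x ∈ Set.Ioc (0:ℝ) 1, ∀ y ∈ Set.Ioc (0:ℝ) 1, x ≤ y →
      x ^ γ / a x ≤ y ^ γ / a y := by
    intro γ hγ
    have hcont : ContinuousOn (fun x : ℝ => x ^ γ / a x) (Set.Ioc 0 1) := by
      apply ContinuousOn.div
      · exact fun x hx =>
          (Real.continuousAt_rpow_const x γ (Or.inl hx.1.ne')).continuousWithinAt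
      · exact ha_cont.mono Set.Ioc_subset_Icc_self
      · exact fun x hx => (hapos x hx).ne'
    have hd : ∀ x ∈ interior (Set.Ioc (0:ℝ) 1),
        HasDerivAt (fun x : ℝ => x ^ γ / a x)
          ((γ * x ^ (γ - 1) * a x - x ^ γ * a' x) / (a x) ^ 2) x := by
      intro x hx
      rw [interior_Ioc] at hx
      have hx' : x ∈ Set.Ioc (0:ℝ) 1 := ⟨hx.1, hx.2.le⟩
      have h1 : HasDerivAt (fun x : ℝ => x ^ γ) (γ * x ^ (γ - 1)) x :=
        Real.hasDerivAt_rpow_const (Or.inl hx.1.ne')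
      exact h1.div (ha_deriv x hx') (hapos x hx').ne'
    have hmon : MonotoneOn (fun x : ℝ => x ^ γ / a x) (Set.Ioc 0 1) := by
      apply monotoneOn_of_deriv_nonneg (convex_Ioc 0 1) hcont
      · exact fun x hx => (hd x hx).differentiableAt.differentiableWithinAt
      · intro x hx
        rw [(hd x hx).deriv]
        rw [interior_Ioc] at hx
        have hx' : x ∈ Set.Ioc (0:ℝ) 1 := ⟨hx.1, hx.2.le⟩
        have hax := hapos x hx'
        have hb := hbound x hx'
        have hxp : (0:ℝ) < x ^ (γ - 1) := Real.rpow_pos_of_pos hx.1 _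
        have hsplit : x ^ γ = x ^ (γ - 1) * x := by
          rw [← Real.rpow_add_one hx.1.ne' (γ - 1)]; ring_nf
        have habs : a' x ≤ |a' x| := le_abs_self _
        have hnum : 0 ≤ γ * x ^ (γ - 1) * a x - x ^ γ * a' x := by
          rw [hsplit]
          have h2 : x ^ (γ - 1) * x * a' x ≤ x ^ (γ - 1) * (x * |a' x|) := by
            rw [mul_assoc]
            apply mul_le_mul_of_nonneg_left _ hxp.le
            exact mul_le_mul_of_nonneg_left habs hx.1.le
          have h3 : x ^ (γ - 1) * (x * |a' x|) ≤ x ^ (γ - 1) * (K * a x) :=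
            mul_le_mul_of_nonneg_left hb hxp.le
          have h4 : x ^ (γ - 1) * (K * a x) ≤ x ^ (γ - 1) * (γ * a x) :=
            mul_le_mul_of_nonneg_left (mul_le_mul_of_nonneg_right hγ hax.le) hxp.le
          nlinarith [h2, h3, h4]
        positivity
    exact fun x hx y hy hxy => hmon hx hy hxy
  refine ⟨hmono, ?_⟩
  intro γ hγ
  set δ := (γ - K) / 2 with hδdef
  have hδ : 0 < δ := by simp [hδdef]; linarith
  have hγ' : K ≤ K + δ := by linarith
  have ha1 : 0 < a 1 := hapos 1 ⟨one_pos, le_refl 1⟩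
  have hub : ∀ x ∈ Set.Ioc (0:ℝ) 1, x ^ γ / a x ≤ x ^ δ / a 1 := by
    intro x hx
    have h1 := hmono (K + δ) hγ' x hx 1 ⟨one_pos, le_refl 1⟩ hx.2
    rw [Real.one_rpow] at h1
    have hax := hapos x hx
    have hsplit : x ^ γ = x ^ δ * x ^ (K + δ) := by
      rw [← Real.rpow_add hx.1, hδdef]; ring_nf
    rw [hsplit]
    have hxδ : (0:ℝ) ≤ x ^ δ := (Real.rpow_pos_of_pos hx.1 _).le
    calc x ^ δ * x ^ (K + δ) / a x = x ^ δ * (x ^ (K + δ) / a x) := by ring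
    _ ≤ x ^ δ * (1 / a 1) := mul_le_mul_of_nonneg_left h1 hxδ
    _ = x ^ δ / a 1 := by ring
  have hmem : ∀ᶠ x in nhdsWithin (0:ℝ) (Set.Ioi 0), x ∈ Set.Ioc (0:ℝ) 1 := by
    filter_upwards [Ioo_mem_nhdsGT_of_mem (Set.left_mem_Ico.mpr one_pos)] with x hx
    exact ⟨hx.1, hx.2.le⟩
  have hg : Filter.Tendsto (fun x : ℝ => x ^ δ / a 1) (nhdsWithin 0 (Set.Ioi 0)) (nhds 0) := by
    have h0 : Filter.Tendsto (fun x : ℝ => x ^ δ) (nhdsWithin 0 (Set.Ioi 0)) (nhds 0) := by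
      have := (Real.continuousAt_rpow_const 0 δ (Or.inr hδ.le)).continuousWithinAt
        (s := Set.Ioi 0)
      simpa [ContinuousWithinAt, Real.zero_rpow hδ.ne'] using this
    simpa using h0.div_const (a 1)
  apply squeeze_zero'
  · filter_upwards [hmem] with x hx
    exact div_nonneg (Real.rpow_nonneg hx.1.le γ) (hapos x hx).le
  · filter_upwards [hmem] with x hx
    exact hub x hx
  · exact hg
end

section
/- Assume Hypothesis (H0) with K ≤ 1. If u ∈ H²_{1/σ,0}(0,1), then lim_{x→0⁺} x (u'(x))² = 0. -/
open MeasureTheory Set Filter Topology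

/-- The Feller weight `η(x) = exp (∫_{1/2}^x b/a)`. -/
noncomputable def etaW (a b : ℝ → ℝ) (x : ℝ) : ℝ :=
  Real.exp (∫ s in (1/2 : ℝ)..x, b s / a s)

/-- The weight `σ = a / η`. -/
noncomputable def sigW (a b : ℝ → ℝ) (x : ℝ) : ℝ :=
  a x / etaW a b x

/-- `u ∈ H¹(0,1)` with (a.e.) derivative `u'`. -/
structure MemH1 (u u' : ℝ → ℝ) : Prop where
  cont : ContinuousOn u (Set.Icc 0 1)
  hasDeriv : ∀ᵐ x ∂(volume.restrict (Set.Ioo (0:ℝ) 1)), HasDerivAt u (u' x) x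
  deriv_sq_int : IntegrableOn (fun x => (u' x) ^ 2) (Set.Ioo (0:ℝ) 1)
  ftc : ∀ x ∈ Set.Icc (0:ℝ) 1, u x = u 0 + ∫ t in Set.Ioo (0:ℝ) x, u' t

/-- `u ∈ L²_{1/σ}(0,1)`. -/
def MemL2sig (a b u : ℝ → ℝ) : Prop :=
  IntegrableOn (fun x => (u x) ^ 2) (Set.Ioo (0:ℝ) 1) ∧
  IntegrableOn (fun x => (u x) ^ 2 / sigW a b x) (Set.Ioo (0:ℝ) 1)

/-- `u ∈ H¹_{1/σ}(0,1)`. -/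
structure MemH1sig (a b u u' : ℝ → ℝ) extends MemH1 u u' : Prop where
  l2sig : MemL2sig a b u

/-- `u ∈ H¹_{1/σ,0}(0,1)`. -/
structure MemH1sig0 (a b u u' : ℝ → ℝ) extends MemH1sig a b u u' : Prop where
  zero : u 0 = 0

/-- `u ∈ H²_{1/σ}(0,1)`: `η u'` is locally absolutely continuous on `(0,1]`
with derivative `w`, and `Au = σ (η u')' = σ w ∈ L²_{1/σ}`. -/
structure MemH2sig (a b u u' w : ℝ → ℝ) extends MemH1sig a b u u' : Prop where
  w_locint : ∀ c ∈ Set.Ioc (0:ℝ) 1, IntegrableOn w (Set.Icc c 1)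
  locAC : ∀ c ∈ Set.Ioc (0:ℝ) 1, ∀ x ∈ Set.Icc c 1,
    etaW a b x * u' x = etaW a b c * u' c + ∫ t in Set.Ioo c x, w t
  Au_l2sig : MemL2sig a b (fun x => sigW a b x * w x)

/-- `u ∈ H²_{1/σ,0}(0,1)`. -/
structure MemH2sig0 (a b u u' w : ℝ → ℝ) extends MemH2sig a b u u' w : Prop where
  zero : u 0 = 0

/-- Hypothesis (H0): there is `K > 0` such that `x ↦ x^K / a x` is nondecreasing
in a right neighborhood of `0`. -/
def HypH0K (a : ℝ → ℝ) (K : ℝ) : Prop :=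
  0 < K ∧ ∃ ε > (0:ℝ), ∀ x y : ℝ, 0 < x → x ≤ y → y ≤ ε →
    x ^ K / a x ≤ y ^ K / a y

def HypH0 (a : ℝ → ℝ) : Prop := ∃ K : ℝ, HypH0K a K

private lemma amgm_aux (lam P : ℝ) (hlam : 0 < lam) :
    P ≤ P ^ 2 / (2 * lam) + lam / 2 := by
  have hd := div_nonneg (sq_nonneg (P - lam)) (by linarith : (0:ℝ) ≤ 2 * lam)
  have hid : (P - lam) ^ 2 / (2 * lam) = P ^ 2 / (2 * lam) + lam / 2 - P := by
    field_simp
    ring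
  rw [hid] at hd
  linarith

/-- If Hypothesis (H0) holds with `K ≤ 1` and `u ∈ H²_{1/σ,0}(0,1)`, then
`x (u'(x))² → 0` as `x → 0⁺`. -/
theorem stmt6 (a b u u' w : ℝ → ℝ) (K : ℝ)
    (ha : ContinuousOn a (Set.Icc 0 1)) (hb : ContinuousOn b (Set.Icc 0 1))
    (ha0 : a 0 = 0) (hapos : ∀ x ∈ Set.Ioc (0:ℝ) 1, 0 < a x)
    (hba : IntegrableOn (fun x => b x / a x) (Set.Ioo (0:ℝ) 1))
    (hH0 : HypH0K a K) (hK1 : K ≤ 1)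
    (hu : MemH2sig0 a b u u' w) :
    Filter.Tendsto (fun x => x * (u' x) ^ 2) (nhdsWithin 0 (Set.Ioi 0)) (nhds 0) := by
  classical
  obtain ⟨hK0, ε, εpos, hmono⟩ := hH0
  set M : ℝ := ∫ t in Set.Ioo (0:ℝ) 1, |b t / a t| with hMdef
  clear_value M
  have hbaIoc : IntegrableOn (fun x => b x / a x) (Set.Ioc 0 1) :=
    (integrableOn_Ioc_iff_integrableOn_Ioo).mpr hba
  have hM0 : 0 ≤ M := by
    rw [hMdef]; exact setIntegral_nonneg measurableSet_Ioo (fun t _ => abs_nonneg _)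
  -- bounds on the weight η
  have heta : ∀ t : ℝ, 0 < t → t ≤ 1 →
      Real.exp (-M) ≤ etaW a b t ∧ etaW a b t ≤ Real.exp M := by
    intro t ht0 ht1
    have habs : |∫ s in (1/2:ℝ)..t, b s / a s| ≤ M := by
      have h1 : |∫ s in (1/2:ℝ)..t, b s / a s| ≤ ∫ s in Set.uIoc (1/2:ℝ) t, |b s / a s| := by
        simpa only [Real.norm_eq_abs] using
          intervalIntegral.norm_integral_le_integral_norm_uIoc
            (f := fun s => b s / a s) (a := (1/2:ℝ)) (b := t) (μ := volume)
      have hsub : Set.uIoc (1/2:ℝ) t ⊆ Set.Ioc (0:ℝ) 1 := by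
        intro s hs
        rw [Set.mem_uIoc] at hs
        rcases hs with ⟨h1', h2'⟩ | ⟨h1', h2'⟩ <;> constructor <;> linarith
      have h2 : ∫ s in Set.uIoc (1/2:ℝ) t, |b s / a s| ≤ ∫ s in Set.Ioc (0:ℝ) 1, |b s / a s| := by
        apply setIntegral_mono_set hbaIoc.abs
        · exact Filter.Eventually.of_forall (fun s => abs_nonneg _)
        · exact HasSubset.Subset.eventuallyLE hsub
      have h3 : ∫ s in Set.Ioc (0:ℝ) 1, |b s / a s| = M := by
        rw [hMdef]
        exact setIntegral_congr_set (MeasureTheory.Ioo_ae_eq_Ioc (a := (0:ℝ)) (b := 1)).symm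
      linarith
    obtain ⟨hl, hr⟩ := abs_le.mp habs
    exact ⟨Real.exp_le_exp.mpr hl, Real.exp_le_exp.mpr hr⟩
  -- the point y₀ and the lower bound for a
  set y₀ : ℝ := min ε 1 with hy₀def
  clear_value y₀
  have hy₀pos : 0 < y₀ := by rw [hy₀def]; exact lt_min εpos one_pos
  have hy₀le1 : y₀ ≤ 1 := by rw [hy₀def]; exact min_le_right _ _
  have hy₀leε : y₀ ≤ ε := by rw [hy₀def]; exact min_le_left _ _
  have hay₀ : 0 < a y₀ := hapos y₀ ⟨hy₀pos, hy₀le1⟩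
  have hy₀K : 0 < y₀ ^ K := Real.rpow_pos_of_pos hy₀pos K
  set c : ℝ := a y₀ / y₀ ^ K with hcdef
  clear_value c
  have hc : 0 < c := by rw [hcdef]; exact div_pos hay₀ hy₀K
  have halb : ∀ t : ℝ, 0 < t → t ≤ y₀ → c * t ≤ a t := by
    intro t ht0 hty
    have hat : 0 < a t := hapos t ⟨ht0, hty.trans hy₀le1⟩
    have h := hmono t y₀ ht0 hty hy₀leε
    rw [div_le_div_iff₀ hat hay₀] at h
    have htt : t ≤ t ^ K := by
      have := Real.rpow_le_rpow_of_exponent_ge ht0 (hty.trans hy₀le1) hK1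
      simpa [Real.rpow_one] using this
    rw [hcdef, div_mul_eq_mul_div, div_le_iff₀ hy₀K]
    nlinarith [mul_le_mul_of_nonneg_left htt hay₀.le]
  -- the L² norm of Au weighted by 1/σ
  have hAu2 : IntegrableOn (fun t => (sigW a b t * w t) ^ 2 / sigW a b t) (Set.Ioo (0:ℝ) 1) :=
    hu.Au_l2sig.2
  set D2 : ℝ := ∫ t in Set.Ioo (0:ℝ) 1, (sigW a b t * w t) ^ 2 / sigW a b t with hD2def
  clear_value D2
  have hσpos : ∀ t : ℝ, 0 < t → t ≤ 1 → 0 < sigW a b t := fun t ht0 ht1 =>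
    div_pos (hapos t ⟨ht0, ht1⟩) (Real.exp_pos _)
  have hD2nonneg : 0 ≤ D2 := by
    rw [hD2def]
    exact setIntegral_nonneg measurableSet_Ioo fun t ht =>
      div_nonneg (sq_nonneg _) (hσpos t ht.1 ht.2.le).le
  set vy : ℝ := etaW a b y₀ * u' y₀ with hvydef
  clear_value vy
  set C₀ : ℝ := |vy| + D2 / 2 + Real.exp M / (2 * c) with hC₀def
  set C₁ : ℝ := D2 / 2 with hC₁def
  clear_value C₀ C₁
  have hC₁0 : 0 ≤ C₁ := by rw [hC₁def]; linarith
  have hexpc : 0 ≤ Real.exp M / (2 * c) :=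
    div_nonneg (Real.exp_pos M).le (by linarith)
  have hC₀0 : 0 ≤ C₀ := by
    rw [hC₀def]; have := abs_nonneg vy; linarith
  -- The key pointwise estimate
  have key : ∀ x : ℝ, x ∈ Set.Ioo 0 y₀ →
      x * u' x ^ 2 ≤ Real.exp (2 * M) * (x * (C₀ + C₁ * (Real.log y₀ - Real.log x)) ^ 2) := by
    intro x hx
    obtain ⟨hx0, hxy⟩ := hx
    have hx1 : x ≤ 1 := hxy.le.trans hy₀le1
    set L : ℝ := Real.log y₀ - Real.log x with hLdef
    clear_value L
    have hL : 0 < L := by rw [hLdef]; exact sub_pos.mpr (Real.log_lt_log hx0 hxy)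
    have h1L : 0 < 1 + L := by linarith
    set lam : ℝ := 1 / (1 + L) with hlamdef
    clear_value lam
    have hlam : 0 < lam := by rw [hlamdef]; exact one_div_pos.mpr h1L
    have hsubIcc : Set.Ioo x y₀ ⊆ Set.Icc x 1 := fun t ht =>
      ⟨ht.1.le, ht.2.le.trans hy₀le1⟩
    have hsub01 : Set.Ioo x y₀ ⊆ Set.Ioo 0 1 := fun t ht =>
      ⟨hx0.trans ht.1, lt_of_lt_of_le ht.2 hy₀le1⟩
    have hw1 : IntegrableOn w (Set.Icc x 1) := hu.w_locint x ⟨hx0, hx1⟩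
    have hIw : IntegrableOn (fun t => |w t|) (Set.Ioo x y₀) := (hw1.mono_set hsubIcc).abs
    have hI1 : IntegrableOn (fun t => (sigW a b t * w t) ^ 2 / sigW a b t) (Set.Ioo x y₀) :=
      hAu2.mono_set hsub01
    have hI2 : IntegrableOn (fun t => 1 / t) (Set.Ioo x y₀) := by
      have hcont : ContinuousOn (fun t : ℝ => 1 / t) (Set.Icc x y₀) :=
        continuousOn_const.div continuousOn_id fun t ht =>
          ne_of_gt (lt_of_lt_of_le hx0 ht.1)
      exact hcont.integrableOn_Icc.mono_set Set.Ioo_subset_Icc_self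
    -- pointwise bound on |w|
    have hpt : ∀ t ∈ Set.Ioo x y₀, |w t| ≤
        1 / (2 * lam) * ((sigW a b t * w t) ^ 2 / sigW a b t)
          + lam * Real.exp M / (2 * c) * (1 / t) := by
      intro t ht
      have ht0 : 0 < t := hx0.trans ht.1
      have ht1 : t ≤ 1 := ht.2.le.trans hy₀le1
      have hat : 0 < a t := hapos t ⟨ht0, ht1⟩
      have hηpos : 0 < etaW a b t := Real.exp_pos _
      have hηub : etaW a b t ≤ Real.exp M := (heta t ht0 ht1).2
      have hσ : 0 < sigW a b t := hσpos t ht0 ht1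
      have hca : c * t ≤ a t := halb t ht0 ht.2.le
      have hw_eq : |w t| = |sigW a b t * w t| * (1 / sigW a b t) := by
        rw [abs_mul, abs_of_pos hσ]
        field_simp
      have hln : lam ≠ 0 := ne_of_gt hlam
      have hPle : |sigW a b t * w t| ≤
          |sigW a b t * w t| ^ 2 / (2 * lam) + lam / 2 :=
        amgm_aux lam _ hlam
      have hfrac : 1 / sigW a b t ≤ Real.exp M / (c * t) := by
        have hSeq : 1 / sigW a b t = etaW a b t / a t := by
          rw [sigW, one_div_div]
        rw [hSeq]
        exact div_le_div₀ (Real.exp_pos M).le hηub (mul_pos hc ht0) hca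
      have hS1 : 0 ≤ 1 / sigW a b t := by positivity
      calc |w t| = |sigW a b t * w t| * (1 / sigW a b t) := hw_eq
        _ ≤ (|sigW a b t * w t| ^ 2 / (2 * lam) + lam / 2) * (1 / sigW a b t) :=
            mul_le_mul_of_nonneg_right hPle hS1
        _ = 1 / (2 * lam) * ((sigW a b t * w t) ^ 2 / sigW a b t)
              + lam / 2 * (1 / sigW a b t) := by
            rw [sq_abs]; ring
        _ ≤ 1 / (2 * lam) * ((sigW a b t * w t) ^ 2 / sigW a b t)
              + lam / 2 * (Real.exp M / (c * t)) := by
            have := mul_le_mul_of_nonneg_left hfrac (by positivity : (0:ℝ) ≤ lam / 2)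
            linarith
        _ = 1 / (2 * lam) * ((sigW a b t * w t) ^ 2 / sigW a b t)
              + lam * Real.exp M / (2 * c) * (1 / t) := by
            field_simp
    -- integral bound
    have hwint : ∫ t in Set.Ioo x y₀, |w t| ≤
        1 / (2 * lam) * D2 + lam * Real.exp M / (2 * c) * L := by
      have hIh : IntegrableOn (fun t => 1 / (2 * lam) * ((sigW a b t * w t) ^ 2 / sigW a b t)
          + lam * Real.exp M / (2 * c) * (1 / t)) (Set.Ioo x y₀) :=
        (hI1.const_mul _).add (hI2.const_mul _)
      have step1 := setIntegral_mono_on hIw hIh measurableSet_Ioo hpt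
      have step2 : (∫ t in Set.Ioo x y₀,
            (1 / (2 * lam) * ((sigW a b t * w t) ^ 2 / sigW a b t)
              + lam * Real.exp M / (2 * c) * (1 / t)))
          = 1 / (2 * lam) * (∫ t in Set.Ioo x y₀, (sigW a b t * w t) ^ 2 / sigW a b t)
            + lam * Real.exp M / (2 * c) * ∫ t in Set.Ioo x y₀, 1 / t := by
        rw [integral_add (hI1.const_mul _) (hI2.const_mul _),
          integral_const_mul, integral_const_mul]
      have step3 : (∫ t in Set.Ioo x y₀, (sigW a b t * w t) ^ 2 / sigW a b t) ≤ D2 := by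
        rw [hD2def]
        apply setIntegral_mono_set hAu2
        · filter_upwards [ae_restrict_mem measurableSet_Ioo] with t ht
          exact div_nonneg (sq_nonneg _) (hσpos t ht.1 ht.2.le).le
        · exact HasSubset.Subset.eventuallyLE hsub01
      have step4 : (∫ t in Set.Ioo x y₀, (1:ℝ) / t) = L := by
        rw [← MeasureTheory.integral_Ioc_eq_integral_Ioo,
          ← intervalIntegral.integral_of_le hxy.le,
          integral_one_div (by
            rw [Set.uIcc_of_le hxy.le]
            exact fun h => absurd h.1 (not_le.mpr hx0)),
          Real.log_div (ne_of_gt hy₀pos) (ne_of_gt hx0)]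
        exact hLdef.symm
      have hcoef1 : (0:ℝ) ≤ 1 / (2 * lam) := by positivity
      calc (∫ t in Set.Ioo x y₀, |w t|) ≤ _ := step1
        _ = _ := step2
        _ ≤ 1 / (2 * lam) * D2 + lam * Real.exp M / (2 * c) * L := by
            rw [step4]
            have := mul_le_mul_of_nonneg_left step3 hcoef1
            linarith
    -- from local absolute continuity
    have hAC := hu.locAC x ⟨hx0, hx1⟩ y₀ ⟨hxy.le, hy₀le1⟩
    have h1 : etaW a b x * u' x = vy - ∫ t in Set.Ioo x y₀, w t := by
      rw [hvydef, hAC]; ring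
    have hIabs : |∫ t in Set.Ioo x y₀, w t| ≤ ∫ t in Set.Ioo x y₀, |w t| := by
      simpa [Real.norm_eq_abs] using
        MeasureTheory.norm_integral_le_integral_norm
          (f := w) (μ := volume.restrict (Set.Ioo x y₀))
    have h2 : |etaW a b x * u' x| ≤ |vy| + ∫ t in Set.Ioo x y₀, |w t| := by
      rw [h1, sub_eq_add_neg]
      calc |vy + -∫ t in Set.Ioo x y₀, w t| ≤ |vy| + |-∫ t in Set.Ioo x y₀, w t| :=
            abs_add_le _ _
        _ = |vy| + |∫ t in Set.Ioo x y₀, w t| := by rw [abs_neg]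
        _ ≤ _ := by linarith
    have e1 : (1:ℝ) / (2 * lam) = (1 + L) / 2 := by
      rw [hlamdef]; field_simp
    have hlamL : lam * L ≤ 1 := by
      rw [hlamdef, div_mul_eq_mul_div, div_le_one h1L]; linarith
    have e2 : lam * Real.exp M / (2 * c) * L ≤ Real.exp M / (2 * c) := by
      calc lam * Real.exp M / (2 * c) * L = lam * L * (Real.exp M / (2 * c)) := by ring
        _ ≤ 1 * (Real.exp M / (2 * c)) := mul_le_mul_of_nonneg_right hlamL hexpc
        _ = Real.exp M / (2 * c) := one_mul _
    have hvbound : |etaW a b x * u' x| ≤ C₀ + C₁ * L := by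
      have h3 : |etaW a b x * u' x| ≤
          |vy| + (1 / (2 * lam) * D2 + lam * Real.exp M / (2 * c) * L) := by
        linarith
      rw [e1] at h3
      rw [hC₀def, hC₁def]
      nlinarith
    -- conclude
    have hηx : Real.exp (-M) ≤ etaW a b x := (heta x hx0 hx1).1
    have hC0L : 0 ≤ C₀ + C₁ * L := le_trans (abs_nonneg _) hvbound
    have hvsq : (etaW a b x * u' x) ^ 2 ≤ (C₀ + C₁ * L) ^ 2 := by
      have hle : etaW a b x * u' x ≤ C₀ + C₁ * L := le_trans (le_abs_self _) hvbound
      have hge : -(C₀ + C₁ * L) ≤ etaW a b x * u' x := by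
        have := neg_abs_le (etaW a b x * u' x); linarith
      exact sq_le_sq' hge hle
    have hsqη : Real.exp (-M) ^ 2 ≤ etaW a b x ^ 2 :=
      pow_le_pow_left₀ (Real.exp_pos (-M)).le hηx 2
    have hηx2 : Real.exp (-M) ^ 2 * u' x ^ 2 ≤ (etaW a b x * u' x) ^ 2 := by
      rw [mul_pow]
      exact mul_le_mul_of_nonneg_right hsqη (sq_nonneg _)
    have hexp2 : Real.exp (-M) ^ 2 = Real.exp (-(2 * M)) := by
      rw [sq, ← Real.exp_add]; congr 1; ring
    have hstep : u' x ^ 2 ≤ Real.exp (2 * M) * (C₀ + C₁ * L) ^ 2 := by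
      have h := le_trans (hexp2 ▸ hηx2) hvsq
      calc u' x ^ 2 = Real.exp (2 * M) * (Real.exp (-(2 * M)) * u' x ^ 2) := by
            rw [← mul_assoc, ← Real.exp_add]; simp
        _ ≤ Real.exp (2 * M) * (C₀ + C₁ * L) ^ 2 :=
            mul_le_mul_of_nonneg_left h (Real.exp_pos _).le
    calc x * u' x ^ 2 ≤ x * (Real.exp (2 * M) * (C₀ + C₁ * L) ^ 2) :=
          mul_le_mul_of_nonneg_left hstep hx0.le
      _ = Real.exp (2 * M) * (x * (C₀ + C₁ * L) ^ 2) := by ring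
  -- the majorant tends to 0
  have hlim : Tendsto
      (fun x : ℝ => Real.exp (2 * M) * (x * (C₀ + C₁ * (Real.log y₀ - Real.log x)) ^ 2))
      (nhdsWithin 0 (Set.Ioi 0)) (nhds 0) := by
    have hψ : Tendsto (fun s : ℝ => Real.exp (2 * M) *
        (Real.exp (-s) * (C₀ + C₁ * (Real.log y₀ + s)) ^ 2)) atTop (nhds 0) := by
      have h0 := (Real.tendsto_pow_mul_exp_neg_atTop_nhds_zero 0).const_mul
        (Real.exp (2 * M) * (C₀ + C₁ * Real.log y₀) ^ 2)
      have h1 := (Real.tendsto_pow_mul_exp_neg_atTop_nhds_zero 1).const_mul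
        (Real.exp (2 * M) * (2 * (C₀ + C₁ * Real.log y₀) * C₁))
      have h2 := (Real.tendsto_pow_mul_exp_neg_atTop_nhds_zero 2).const_mul
        (Real.exp (2 * M) * C₁ ^ 2)
      have hsum := (h0.add h1).add h2
      simp only [mul_zero, add_zero] at hsum
      refine hsum.congr fun s => ?_
      ring
    have hcomp : Tendsto (fun x : ℝ => -Real.log x) (nhdsWithin 0 (Set.Ioi 0)) atTop :=
      tendsto_neg_atBot_atTop.comp Real.tendsto_log_nhdsGT_zero
    refine (hψ.comp hcomp).congr' ?_
    filter_upwards [self_mem_nhdsWithin] with x hx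
    have hx0 : (0:ℝ) < x := hx
    simp only [Function.comp_apply, neg_neg, Real.exp_log hx0]
    ring_nf
  refine squeeze_zero' ?_ ?_ hlim
  · filter_upwards [self_mem_nhdsWithin] with x hx
    exact mul_nonneg (le_of_lt hx) (sq_nonneg _)
  · filter_upwards [Ioo_mem_nhdsGT_of_mem ⟨le_refl (0:ℝ), hy₀pos⟩] with x hx
    exact key x hx
end

section
/- Assume Hypothesis (H0) and let β ≥ 0. Let u ∈ H²_{1/σ,0}(0,1) and v ∈ H¹_{1/σ,0}(0,1) satisfy the boundary condition η(1) u'(1) + v(1) + β u(1) = 0. Then ∫_0^1 η u' v' dx + ∫_0^1 v (Au) (1/σ) dx + β v(1) u(1) = −v(1)² ≤ 0 (dissipativity of the wave operator). -/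
open MeasureTheory Set Filter Topology

section helpers

lemma disjoint_Ioo_Ico (a c d : ℝ) : Disjoint (Set.Ioo a c) (Set.Ico c d) := by
  simp [Set.disjoint_left]; intro x h1 h2 h3; exact absurd h3 (not_le.2 h2)

lemma setInt_Ioo_split {f : ℝ → ℝ} {a c d : ℝ} (hac : a ≤ c) (hcd : c ≤ d)
    (hf : IntegrableOn f (Set.Ioo a d)) :
    ∫ t in Set.Ioo a d, f t = (∫ t in Set.Ioo a c, f t) + ∫ t in Set.Ioo c d, f t := by
  rcases eq_or_lt_of_le hac with rfl | hac'
  · simp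
  · rw [← integral_Ico_eq_integral_Ioo (x := c) (y := d),
      ← setIntegral_union (disjoint_Ioo_Ico a c d) measurableSet_Ico
        (hf.mono_set (Set.Ioo_subset_Ioo_right hcd))
        (hf.mono_set (fun t ht => ⟨lt_of_lt_of_le hac' ht.1, ht.2⟩)),
      Set.Ioo_union_Ico_eq_Ioo hac' hcd]

set_option maxHeartbeats 1000000 in
/-- Fubini-based integration by parts for primitives. -/
lemma ibp_primitive {c d : ℝ} (hcd : c < d) {f g F G : ℝ → ℝ}
    (hf : IntegrableOn f (Set.Ioo c d)) (hg : IntegrableOn g (Set.Ioo c d))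
    (hF : ∀ x ∈ Set.Icc c d, F x = F c + ∫ t in Set.Ioo c x, f t)
    (hG : ∀ x ∈ Set.Icc c d, G x = G c + ∫ t in Set.Ioo c x, g t) :
    ∫ x in Set.Ioo c d, (f x * G x + F x * g x) = F d * G d - F c * G c := by
  set μ := volume.restrict (Set.Ioo c d) with hμ
  have hIoo : MeasurableSet (Set.Ioo c d) := measurableSet_Ioo
  set Φ : ℝ × ℝ → ℝ := ({p : ℝ × ℝ | p.1 ≤ p.2}).indicator (fun p => f p.1 * g p.2) with hΦ
  have hΦint : Integrable Φ (μ.prod μ) :=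
    (hf.mul_prod hg).indicator (measurableSet_le measurable_fst measurable_snd)
  -- inner integral in t, for x ∈ Ioo c d
  have hA : ∀ x ∈ Set.Ioo c d, (∫ t, Φ (x, t) ∂μ)
      = f x * ((∫ t in Set.Ioo c d, g t) - ∫ t in Set.Ioo c x, g t) := by
    intro x hx
    have h1 : (fun t => Φ (x, t)) = (Set.Ici x).indicator (fun t => f x * g t) := by
      funext t
      by_cases h : x ≤ t <;> simp [hΦ, Set.indicator, h]
    rw [h1, integral_indicator measurableSet_Ici, hμ,
      Measure.restrict_restrict measurableSet_Ici]
    have h2 : Set.Ici x ∩ Set.Ioo c d = Set.Ico x d := by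
      ext t; constructor
      · rintro ⟨h1', h2'⟩; exact ⟨h1', h2'.2⟩
      · rintro ⟨h1', h2'⟩; exact ⟨h1', lt_of_lt_of_le hx.1 h1', h2'⟩
    rw [h2, integral_Ico_eq_integral_Ioo, integral_const_mul]
    have h3 : (∫ t in Set.Ioo c d, g t) = (∫ t in Set.Ioo c x, g t) + ∫ t in Set.Ioo x d, g t := by
      rw [← integral_Ico_eq_integral_Ioo (x := x) (y := d),
        ← setIntegral_union (by simp [Set.disjoint_left]; intro a h1 h2 h3; exact absurd h3 (not_le.2 h2)) measurableSet_Ico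
          (hg.mono_set (Set.Ioo_subset_Ioo_right hx.2.le))
          (hg.mono_set (fun t ht => ⟨lt_of_lt_of_le hx.1 ht.1, ht.2⟩)),
        Set.Ioo_union_Ico_eq_Ioo hx.1 hx.2.le]
    rw [h3]; ring
  -- inner integral in x, for t ∈ Ioo c d
  have hB : ∀ t ∈ Set.Ioo c d, (∫ x, Φ (x, t) ∂μ)
      = (∫ x in Set.Ioo c t, f x) * g t := by
    intro t ht
    have h1 : (fun x => Φ (x, t)) = (Set.Iic t).indicator (fun x => f x * g t) := by
      funext x
      by_cases h : x ≤ t <;> simp [hΦ, Set.indicator, h]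
    rw [h1, integral_indicator measurableSet_Iic, hμ,
      Measure.restrict_restrict measurableSet_Iic]
    have h2 : Set.Iic t ∩ Set.Ioo c d = Set.Ioc c t := by
      ext x; constructor
      · rintro ⟨h1', h2'⟩; exact ⟨h2'.1, h1'⟩
      · rintro ⟨h1', h2'⟩; exact ⟨h2', h1', lt_of_le_of_lt h2' ht.2⟩
    rw [h2, integral_Ioc_eq_integral_Ioo, integral_mul_const]
  -- totals
  set If := ∫ x, f x ∂μ with hIf
  set Ig := ∫ x, g x ∂μ with hIg
  have hmem : ∀ᵐ x ∂μ, x ∈ Set.Ioo c d := ae_restrict_mem hIoo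
  have hT : Integrable (fun x => ∫ t, Φ (x, t) ∂μ) μ := hΦint.integral_prod_left
  have hT' : Integrable (fun t => ∫ x, Φ (x, t) ∂μ) μ := hΦint.integral_prod_right
  have e1 : (fun x => f x * G x) =ᵐ[μ] fun x => f x * (G c + Ig) - ∫ t, Φ (x, t) ∂μ := by
    filter_upwards [hmem] with x hx
    rw [hA x hx, hG x ⟨hx.1.le, hx.2.le⟩]
    have h4 : Ig = ∫ t in Set.Ioo c d, g t := rfl
    rw [h4]; ring
  have e2 : (fun t => F t * g t) =ᵐ[μ] fun t => F c * g t + ∫ x, Φ (x, t) ∂μ := by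
    filter_upwards [hmem] with t ht
    rw [hB t ht, hF t ⟨ht.1.le, ht.2.le⟩]; ring
  have hf' : Integrable f μ := hf
  have i1 : Integrable (fun x => f x * G x) μ :=
    (Integrable.sub (hf'.mul_const (G c + Ig)) hT).congr e1.symm
  have i2 : Integrable (fun t => F t * g t) μ :=
    (Integrable.add (hg.const_mul (F c)) hT').congr e2.symm
  have hswap : (∫ x, ∫ t, Φ (x, t) ∂μ ∂μ) = ∫ t, ∫ x, Φ (x, t) ∂μ ∂μ := by
    exact MeasureTheory.integral_integral_swap (μ := μ) (ν := μ)
      (f := fun x t => Φ (x, t)) (by exact hΦint)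
  have hg' : Integrable g μ := hg
  have hFd : F d = F c + If := by rw [hF d ⟨hcd.le, le_rfl⟩]
  have hGd : G d = G c + Ig := by rw [hG d ⟨hcd.le, le_rfl⟩]
  have key : ∫ x in Set.Ioo c d, (f x * G x + F x * g x)
      = (∫ x, f x * G x ∂μ) + ∫ x, F x * g x ∂μ := integral_add i1 i2
  rw [key, integral_congr_ae e1, integral_congr_ae e2,
    integral_sub (hf'.mul_const (G c + Ig)) hT, integral_add (hg'.const_mul (F c)) hT',
    hswap, integral_mul_const, integral_const_mul, hFd, hGd]
  ring


lemma etaW_pos (a b : ℝ → ℝ) (x : ℝ) : 0 < etaW a b x := Real.exp_pos _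

lemma etaW_le (a b : ℝ → ℝ) (hba : IntegrableOn (fun x => b x / a x) (Set.Ioo (0:ℝ) 1))
    {x : ℝ} (hx : x ∈ Set.Icc (0:ℝ) 1) :
    etaW a b x ≤ Real.exp (∫ s in Set.Ioo (0:ℝ) 1, |b s / a s|) := by
  apply Real.exp_le_exp.2
  calc (∫ s in (1/2 : ℝ)..x, b s / a s)
      ≤ |∫ s in (1/2 : ℝ)..x, b s / a s| := le_abs_self _
    _ ≤ ∫ s in Set.uIoc (1/2 : ℝ) x, |b s / a s| := by
        simpa only [Real.norm_eq_abs] using intervalIntegral.norm_integral_le_integral_norm_uIoc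
          (f := fun s => b s / a s) (a := (1/2:ℝ)) (b := x) (μ := volume)
    _ ≤ ∫ s in Set.Ioo (0:ℝ) 1, |b s / a s| := by
        apply setIntegral_mono_set hba.abs
        · exact Eventually.of_forall fun s => abs_nonneg _
        · refine ae_le_set.2 (measure_mono_null ?_ (measure_singleton (1:ℝ)))
          intro s hs
          simp only [Set.mem_diff, Set.mem_Ioo, not_and, not_lt, Set.mem_singleton_iff] at hs ⊢
          rcases hs with ⟨⟨h1, h2⟩, h3⟩
          have hs0 : 0 < s := lt_of_le_of_lt (le_min (by norm_num) hx.1) h1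
          have hs1 : s ≤ 1 := le_trans h2 (max_le (by norm_num) hx.2)
          exact le_antisymm hs1 (h3 hs0)


lemma aesm_deriv {u u' : ℝ → ℝ}
    (h : ∀ᵐ x ∂(volume.restrict (Set.Ioo (0:ℝ) 1)), HasDerivAt u (u' x) x) :
    AEStronglyMeasurable u' (volume.restrict (Set.Ioo (0:ℝ) 1)) :=
  (measurable_deriv u).aestronglyMeasurable.congr (h.mono fun _ hx => hx.deriv)

end helpers

set_option maxHeartbeats 4000000 in
/-- Dissipativity: if `η(1) u'(1) + v(1) + β u(1) = 0` then
`∫ η u' v' + ∫ v (Au) / σ + β v(1) u(1) = -v(1)² ≤ 0`. -/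
theorem stmt11 (a b u u' w v v' : ℝ → ℝ) (β : ℝ)
    (ha : ContinuousOn a (Set.Icc 0 1)) (hb : ContinuousOn b (Set.Icc 0 1))
    (ha0 : a 0 = 0) (hapos : ∀ x ∈ Set.Ioc (0:ℝ) 1, 0 < a x)
    (hba : IntegrableOn (fun x => b x / a x) (Set.Ioo (0:ℝ) 1))
    (hH0 : HypH0 a) (hβ : 0 ≤ β)
    (hu : MemH2sig0 a b u u' w) (hv : MemH1sig0 a b v v')
    (hbc : etaW a b 1 * u' 1 + v 1 + β * u 1 = 0) :
    (∫ x in Set.Ioo (0:ℝ) 1, etaW a b x * u' x * v' x) +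
        (∫ x in Set.Ioo (0:ℝ) 1, v x * (sigW a b x * w x) * (1 / sigW a b x)) +
        β * v 1 * u 1 = -(v 1) ^ 2 ∧
      -(v 1) ^ 2 ≤ 0 := by
  have hEM := fun {x} hx => etaW_le a b hba (x := x) hx
  set EM : ℝ := Real.exp (∫ s in Set.Ioo (0:ℝ) 1, |b s / a s|) with hEMdef
  have hEM1 : 1 ≤ EM := by
    rw [hEMdef, ← Real.exp_zero, Real.exp_le_exp]
    · exact setIntegral_nonneg measurableSet_Ioo fun s _ => abs_nonneg _
  -- measurability
  have hu'm : AEStronglyMeasurable u' (volume.restrict (Set.Ioo (0:ℝ) 1)) :=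
    aesm_deriv hu.hasDeriv
  have hv'm : AEStronglyMeasurable v' (volume.restrict (Set.Ioo (0:ℝ) 1)) :=
    aesm_deriv hv.hasDeriv
  have hvm : AEStronglyMeasurable v (volume.restrict (Set.Ioo (0:ℝ) 1)) :=
    (hv.cont.mono Set.Ioo_subset_Icc_self).aestronglyMeasurable measurableSet_Ioo
  have hwm : AEStronglyMeasurable w (volume.restrict (Set.Ioo (0:ℝ) 1)) := by
    have hsub : Set.Ioo (0:ℝ) 1 ⊆ ⋃ n : ℕ, Set.Icc (1/(n+2) : ℝ) 1 := by
      intro x hx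
      obtain ⟨n, hn⟩ := exists_nat_ge (1/x)
      refine Set.mem_iUnion.2 ⟨n, ?_, hx.2.le⟩
      rw [div_le_iff₀ (by positivity)]
      rw [div_le_iff₀ hx.1] at hn
      nlinarith [hx.1]
    have h1 : AEStronglyMeasurable w (volume.restrict (⋃ n : ℕ, Set.Icc (1/(n+2) : ℝ) 1)) :=
      aestronglyMeasurable_iUnion_iff.2 fun n =>
        (hu.w_locint (1/(n+2)) ⟨by positivity, by rw [div_le_one (by positivity)]; linarith [Nat.cast_nonneg (α := ℝ) n]⟩).aestronglyMeasurable
    exact h1.mono_measure (Measure.restrict_mono hsub le_rfl)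
  have hEm : AEStronglyMeasurable (etaW a b) (volume.restrict (Set.Ioo (0:ℝ) 1)) := by
    set g0 : ℝ → ℝ := (Set.Ioo (0:ℝ) 1).indicator (fun s => b s / a s) with hg0def
    have hg0i : Integrable g0 volume := (integrable_indicator_iff measurableSet_Ioo).2 hba
    have hcontP : Continuous fun x => ∫ t in (1/2:ℝ)..x, g0 t :=
      intervalIntegral.continuous_primitive (fun a' b' => hg0i.intervalIntegrable) _
    have heq : ∀ x ∈ Set.Ioo (0:ℝ) 1, etaW a b x = Real.exp (∫ t in (1/2:ℝ)..x, g0 t) := by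
      intro x hx
      unfold etaW
      congr 1
      apply intervalIntegral.integral_congr
      intro t ht
      have ht' : t ∈ Set.Ioo (0:ℝ) 1 := by
        rcases ht with ⟨h1, h2⟩
        constructor
        · exact lt_of_lt_of_le (lt_min (by norm_num) hx.1) h1
        · exact lt_of_le_of_lt h2 (max_lt (by norm_num) hx.2)
      simp [hg0def, Set.indicator_of_mem ht']
    exact ((Real.continuous_exp.comp hcontP).aestronglyMeasurable.restrict).congr
      (by filter_upwards [ae_restrict_mem measurableSet_Ioo] with x hx using (heq x hx).symm)
  have hSpos : ∀ x ∈ Set.Ioo (0:ℝ) 1, 0 < sigW a b x := fun x hx =>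
    div_pos (hapos x ⟨hx.1, hx.2.le⟩) (etaW_pos a b x)
  -- integrability
  have hvw_int : IntegrableOn (fun x => v x * w x) (Set.Ioo (0:ℝ) 1) := by
    have hD : IntegrableOn
        (fun x => ((v x)^2 / sigW a b x + (sigW a b x * w x)^2 / sigW a b x)/2)
        (Set.Ioo (0:ℝ) 1) := (hv.l2sig.2.add hu.Au_l2sig.2).div_const 2
    apply Integrable.mono' hD (hvm.mul hwm)
    filter_upwards [ae_restrict_mem measurableSet_Ioo] with x hx
    have hs := hSpos x hx
    simp only [Pi.mul_apply]
    rw [Real.norm_eq_abs, abs_mul, ← add_div, div_div,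
      le_div_iff₀ (by positivity)]
    nlinarith [sq_nonneg (|v x| - sigW a b x * |w x|), sq_abs (v x), sq_abs (w x),
      abs_nonneg (v x), abs_nonneg (w x), mul_pos hs hs, sq_nonneg (w x), hs,
      mul_nonneg (mul_nonneg (abs_nonneg (v x)) (abs_nonneg (w x))) hs.le]
  have hEuv_int : IntegrableOn (fun x => etaW a b x * u' x * v' x) (Set.Ioo (0:ℝ) 1) := by
    have hD : IntegrableOn (fun x => EM * ((u' x)^2 + (v' x)^2)/2) (Set.Ioo (0:ℝ) 1) :=
      ((hu.deriv_sq_int.add hv.deriv_sq_int).const_mul EM).div_const 2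
    apply Integrable.mono' hD ((hEm.mul hu'm).mul hv'm)
    filter_upwards [ae_restrict_mem measurableSet_Ioo] with x hx
    have h2 : 0 < etaW a b x := etaW_pos a b x
    have h3 : etaW a b x ≤ EM := hEM ⟨hx.1.le, hx.2.le⟩
    have h1 : 2 * (|u' x| * |v' x|) ≤ (u' x)^2 + (v' x)^2 := by
      nlinarith [sq_nonneg (|u' x| - |v' x|), sq_abs (u' x), sq_abs (v' x)]
    simp only [Pi.mul_apply]
    rw [Real.norm_eq_abs, abs_mul, abs_mul, abs_of_pos h2]
    calc etaW a b x * |u' x| * |v' x| = etaW a b x * (|u' x| * |v' x|) := by ring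
      _ ≤ EM * (((u' x)^2 + (v' x)^2)/2) := by
          apply mul_le_mul h3 (by linarith) (by positivity) (by linarith)
      _ = EM * ((u' x)^2 + (v' x)^2)/2 := by ring
  have hv'_int : IntegrableOn v' (Set.Ioo (0:ℝ) 1) := by
    have hD : IntegrableOn (fun x => (1 + (v' x)^2)/2) (Set.Ioo (0:ℝ) 1) :=
      (((integrableOn_const (C := (1:ℝ)) (by simp [Real.volume_Ioo] : volume (Set.Ioo (0:ℝ) 1) ≠ ⊤)).add hv.deriv_sq_int).div_const 2)
    apply Integrable.mono' hD hv'm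
    filter_upwards with x
    rw [Real.norm_eq_abs]
    nlinarith [sq_nonneg (|v' x| - 1), sq_abs (v' x)]
  -- the main analytic claim
  have main : (∫ x in Set.Ioo (0:ℝ) 1, etaW a b x * u' x * v' x)
      + (∫ x in Set.Ioo (0:ℝ) 1, v x * w x) = etaW a b 1 * u' 1 * v 1 := by
    have hwv_int : IntegrableOn (fun x => w x * v x) (Set.Ioo (0:ℝ) 1) := by
      have : (fun x => w x * v x) = fun x => v x * w x := funext fun x => mul_comm _ _
      rw [this]; exact hvw_int
    set h : ℝ → ℝ := fun x => w x * v x + etaW a b x * u' x * v' x with hhdef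
    have hh_int : IntegrableOn h (Set.Ioo (0:ℝ) 1) := hwv_int.add hEuv_int
    have habs_int : IntegrableOn (fun x => |h x|) (Set.Ioo (0:ℝ) 1) := hh_int.abs
    have hIeq : ∫ x in Set.Ioo (0:ℝ) 1, h x
        = (∫ x in Set.Ioo (0:ℝ) 1, etaW a b x * u' x * v' x)
          + ∫ x in Set.Ioo (0:ℝ) 1, v x * w x := by
      rw [hhdef, integral_add hwv_int hEuv_int]
      have : (∫ x in Set.Ioo (0:ℝ) 1, w x * v x) = ∫ x in Set.Ioo (0:ℝ) 1, v x * w x := by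
        apply setIntegral_congr_fun measurableSet_Ioo; intro x _; exact mul_comm _ _
      rw [this]; ring
    rw [← hIeq]
    by_contra hne
    set B : ℝ := etaW a b 1 * u' 1 * v 1 with hBdef
    set I : ℝ := ∫ x in Set.Ioo (0:ℝ) 1, h x with hIdef
    set L : ℝ := |I - B| with hLdef
    have hL : 0 < L := abs_pos.2 (sub_ne_zero.2 hne)
    -- v is a primitive of v'
    have hvprim : ∀ c ∈ Set.Ioc (0:ℝ) 1, ∀ x ∈ Set.Icc c 1,
        v x = v c + ∫ t in Set.Ioo c x, v' t := by
      intro c hc x hx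
      have hx01 : x ∈ Set.Icc (0:ℝ) 1 := ⟨le_trans hc.1.le hx.1, hx.2⟩
      have h1 := hv.ftc x hx01
      have h2 := hv.ftc c ⟨hc.1.le, hc.2⟩
      rw [setInt_Ioo_split hc.1.le hx.1
        (hv'_int.mono_set (Set.Ioo_subset_Ioo_right hx.2))] at h1
      rw [h1, h2]; ring
    -- integration by parts on (c,1)
    have hibp : ∀ c ∈ Set.Ioo (0:ℝ) 1,
        etaW a b c * u' c * v c = (B - I) + ∫ x in Set.Ioo 0 c, h x := by
      intro c hc
      have hcm : c ∈ Set.Ioc (0:ℝ) 1 := ⟨hc.1, hc.2.le⟩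
      have hfint : IntegrableOn w (Set.Ioo c 1) :=
        (hu.w_locint c hcm).mono_set Set.Ioo_subset_Icc_self
      have hgint : IntegrableOn v' (Set.Ioo c 1) :=
        hv'_int.mono_set (fun t ht => ⟨lt_trans hc.1 ht.1, ht.2⟩)
      have h1 := ibp_primitive hc.2 (f := w) (g := v')
        (F := fun y => etaW a b y * u' y) (G := v)
        hfint hgint (hu.locAC c hcm) (hvprim c hcm)
      have h2 : ∫ x in Set.Ioo c 1, h x = B - etaW a b c * u' c * v c := by
        rw [hhdef]
        simpa using h1
      have h3 : I = (∫ x in Set.Ioo 0 c, h x) + ∫ x in Set.Ioo c 1, h x :=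
        setInt_Ioo_split hc.1.le hc.2.le hh_int
      rw [h2] at h3
      linarith
    -- choose δ with small tail of |h|
    obtain ⟨δ, hδ0, hδ1, hδh⟩ :
        ∃ δ : ℝ, 0 < δ ∧ δ < 1 ∧ (∫ x in Set.Ioo 0 δ, |h x|) ≤ L/2 := by
      have hmono : Monotone (fun n : ℕ => Set.Ioo (1/(n+2) : ℝ) 1) := by
        intro m n hmn
        apply Set.Ioo_subset_Ioo _ le_rfl
        apply one_div_le_one_div_of_le (by positivity)
        have := (Nat.cast_le (α := ℝ)).2 hmn; linarith
      have hunion : (⋃ n : ℕ, Set.Ioo (1/(n+2) : ℝ) 1) = Set.Ioo (0:ℝ) 1 := by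
        apply Set.Subset.antisymm
        · exact Set.iUnion_subset fun n => Set.Ioo_subset_Ioo (by positivity) le_rfl
        · intro x hx
          obtain ⟨n, hn⟩ := exists_nat_ge (1/x)
          refine Set.mem_iUnion.2 ⟨n, ?_, hx.2⟩
          rw [div_lt_iff₀ (by positivity)]
          rw [div_le_iff₀ hx.1] at hn
          nlinarith [hx.1]
      have htend := tendsto_setIntegral_of_monotone (f := fun x => |h x|) (μ := volume)
        (fun n => measurableSet_Ioo) hmono (by rw [hunion]; exact habs_int)
      rw [hunion] at htend
      obtain ⟨n, hn⟩ := Metric.tendsto_atTop.1 htend (L/2) (by linarith)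
      have hn' := hn n le_rfl
      have hd0 : (0:ℝ) < 1/(n+2) := by positivity
      have hd1 : (1:ℝ)/(n+2) < 1 := by
        rw [div_lt_one (by positivity)]; nlinarith [Nat.cast_nonneg (α := ℝ) n]
      refine ⟨1/(n+2), hd0, hd1, ?_⟩
      have hsplit := setInt_Ioo_split (a := (0:ℝ)) (c := 1/(n+2:ℝ)) (d := 1)
        hd0.le hd1.le habs_int
      rw [Real.dist_eq] at hn'
      have h2 := abs_lt.1 hn'
      linarith
    -- lower bound for the boundary term near 0
    have hlow : ∀ c ∈ Set.Ioc (0:ℝ) δ, L/2 ≤ |etaW a b c * u' c * v c| := by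
      intro c hc
      have hc1 : c ∈ Set.Ioo (0:ℝ) 1 := ⟨hc.1, lt_of_le_of_lt hc.2 hδ1⟩
      have h1 := hibp c hc1
      have h2 : |∫ x in Set.Ioo 0 c, h x| ≤ L/2 := by
        calc |∫ x in Set.Ioo 0 c, h x| ≤ ∫ x in Set.Ioo 0 c, |h x| := by
              simpa [Real.norm_eq_abs] using
                norm_integral_le_integral_norm (f := h) (μ := volume.restrict (Set.Ioo 0 c))
          _ ≤ ∫ x in Set.Ioo 0 δ, |h x| := by
              apply setIntegral_mono_set
                (habs_int.mono_set (Set.Ioo_subset_Ioo_right hδ1.le))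
                (Eventually.of_forall fun x => abs_nonneg _)
                (HasSubset.Subset.eventuallyLE (Set.Ioo_subset_Ioo_right hc.2))
          _ ≤ L/2 := hδh
      have h3 : L ≤ |∫ x in Set.Ioo 0 c, h x| + |etaW a b c * u' c * v c| := by
        have h4 : I - B = (∫ x in Set.Ioo 0 c, h x) - etaW a b c * u' c * v c := by
          linarith
        calc L = |(∫ x in Set.Ioo 0 c, h x) - etaW a b c * u' c * v c| := by rw [← h4]
          _ ≤ _ := abs_sub _ _
      linarith
    -- case analysis on S = ∫ v'^2 over (0,δ)
    set S : ℝ := ∫ x in Set.Ioo (0:ℝ) δ, (v' x)^2 with hSdef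
    have hSnn : 0 ≤ S := setIntegral_nonneg measurableSet_Ioo fun x _ => sq_nonneg _
    have hv'sq_δ : IntegrableOn (fun x => (v' x)^2) (Set.Ioo (0:ℝ) δ) :=
      hv.deriv_sq_int.mono_set (Set.Ioo_subset_Ioo_right hδ1.le)
    rcases eq_or_lt_of_le hSnn with hS0 | hSpos2
    · -- v' vanishes a.e. near 0, so v δ = 0
      have hz : (fun x => (v' x)^2) =ᵐ[volume.restrict (Set.Ioo (0:ℝ) δ)] 0 :=
        (integral_eq_zero_iff_of_nonneg_ae
          (Eventually.of_forall fun x => sq_nonneg _) hv'sq_δ).1 hS0.symm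
      have hz' : v' =ᵐ[volume.restrict (Set.Ioo (0:ℝ) δ)] 0 := hz.mono fun x hx => by
        have : (v' x)^2 = 0 := hx
        exact pow_eq_zero_iff (by norm_num) |>.1 this
      have hvδ : v δ = 0 := by
        rw [hv.ftc δ ⟨hδ0.le, hδ1.le⟩, hv.zero, integral_congr_ae hz']
        simp
      have hcon := hlow δ ⟨hδ0, le_rfl⟩
      rw [hvδ] at hcon
      simp only [mul_zero, abs_zero] at hcon
      linarith
    · -- quantitative blow-up of u'
      have hEMpos : (0:ℝ) < EM := lt_of_lt_of_le one_pos hEM1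
      have hvb : ∀ c ∈ Set.Ioc (0:ℝ) δ, |v c| ≤ Real.sqrt c * Real.sqrt S := by
        intro c hc
        have hc0 : 0 < c := hc.1
        have hcδ1 : c ≤ 1 := le_trans hc.2 hδ1.le
        set t : ℝ := Real.sqrt c / Real.sqrt S with htdef
        have ht : 0 < t := div_pos (Real.sqrt_pos.2 hc0) (Real.sqrt_pos.2 hSpos2)
        have hvc : v c = ∫ x in Set.Ioo (0:ℝ) c, v' x := by
          rw [hv.ftc c ⟨hc0.le, hcδ1⟩, hv.zero, zero_add]
        have hintsq : IntegrableOn (fun x => (v' x)^2) (Set.Ioo (0:ℝ) c) :=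
          hv.deriv_sq_int.mono_set (Set.Ioo_subset_Ioo_right hcδ1)
        have hconst : IntegrableOn (fun _ : ℝ => 1/t) (Set.Ioo (0:ℝ) c) :=
          integrableOn_const (by simp [Real.volume_Ioo])
        have h1 : |v c| ≤ ∫ x in Set.Ioo (0:ℝ) c, |v' x| := by
          rw [hvc]
          simpa [Real.norm_eq_abs] using
            norm_integral_le_integral_norm (f := v') (μ := volume.restrict (Set.Ioo (0:ℝ) c))
        have h2 : ∫ x in Set.Ioo (0:ℝ) c, |v' x|
            ≤ ∫ x in Set.Ioo (0:ℝ) c, (t * (v' x)^2 + 1/t)/2 := by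
          apply setIntegral_mono_on
            (hv'_int.mono_set (Set.Ioo_subset_Ioo_right hcδ1)).abs
            (((hintsq.const_mul t).add hconst).div_const 2)
            measurableSet_Ioo
          intro x _
          simp only [Pi.add_apply]
          rw [le_div_iff₀ (by norm_num : (0:ℝ) < 2)]
          have hh := sq_nonneg (t * |v' x| - 1)
          have h1t : t * (1/t) = 1 := mul_one_div_cancel ht.ne'
          have hexp : (t * (v' x)^2 + 1/t) * t = t^2 * (v' x)^2 + 1 := by
            field_simp
          have hmul : (2 * |v' x|) * t ≤ (t * (v' x)^2 + 1/t) * t := by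
            rw [hexp]; nlinarith [sq_abs (v' x), hh]
          have := le_of_mul_le_mul_right (by linarith : |v' x| * 2 * t ≤ (t * (v' x)^2 + 1/t) * t) ht
          linarith
        have h3 : ∫ x in Set.Ioo (0:ℝ) c, (t * (v' x)^2 + 1/t)/2
            = (t * (∫ x in Set.Ioo (0:ℝ) c, (v' x)^2) + c * (1/t))/2 := by
          rw [integral_div, integral_add (hintsq.const_mul t) hconst,
            integral_const_mul, setIntegral_const]
          simp [Real.volume_Ioo, ENNReal.toReal_ofReal hc0.le, hc0.le]
        have h4 : (∫ x in Set.Ioo (0:ℝ) c, (v' x)^2) ≤ S := by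
          apply setIntegral_mono_set hv'sq_δ
            (Eventually.of_forall fun x => sq_nonneg _)
            (HasSubset.Subset.eventuallyLE (Set.Ioo_subset_Ioo_right hc.2))
        have h5 : t * S = Real.sqrt c * Real.sqrt S := by
          rw [htdef, div_mul_eq_mul_div, mul_div_assoc, Real.div_sqrt]
        have h6 : c * (1/t) = Real.sqrt c * Real.sqrt S := by
          rw [htdef, one_div_div]
          calc c * (Real.sqrt S / Real.sqrt c) = Real.sqrt S * (c / Real.sqrt c) := by ring
            _ = Real.sqrt S * Real.sqrt c := by rw [Real.div_sqrt]
            _ = Real.sqrt c * Real.sqrt S := mul_comm _ _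
        have h7 : t * (∫ x in Set.Ioo (0:ℝ) c, (v' x)^2) ≤ t * S :=
          mul_le_mul_of_nonneg_left h4 ht.le
        linarith
      -- pointwise lower bound on u'^2
      set C : ℝ := (L/2)^2 / (EM^2 * S) with hCdef
      have hC : 0 < C := div_pos (by positivity) (mul_pos (pow_pos hEMpos 2) hSpos2)
      have hCb : ∀ c ∈ Set.Ioc (0:ℝ) δ, C / c ≤ (u' c)^2 := by
        intro c hc
        have hc1 : c ∈ Set.Icc (0:ℝ) 1 := ⟨hc.1.le, le_trans hc.2 hδ1.le⟩
        have h1 := hlow c hc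
        have h2 := hvb c hc
        have hE1 : 0 < etaW a b c := etaW_pos a b c
        have hE2 : etaW a b c ≤ EM := hEM hc1
        have habs : |etaW a b c * u' c * v c| = etaW a b c * |u' c| * |v c| := by
          rw [abs_mul, abs_mul, abs_of_pos hE1]
        have h3 : L/2 ≤ EM * |u' c| * (Real.sqrt c * Real.sqrt S) := by
          rw [habs] at h1
          calc L/2 ≤ etaW a b c * |u' c| * |v c| := h1
            _ ≤ EM * |u' c| * (Real.sqrt c * Real.sqrt S) := by
                apply mul_le_mul
                  (mul_le_mul hE2 le_rfl (abs_nonneg _) hEMpos.le) h2 (abs_nonneg _)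
                  (by positivity)
        have h4 : (L/2)^2 ≤ EM^2 * (u' c)^2 * (c * S) := by
          have h5 := pow_le_pow_left₀ (by positivity) h3 2
          calc (L/2)^2 ≤ (EM * |u' c| * (Real.sqrt c * Real.sqrt S))^2 := h5
            _ = EM^2 * (u' c)^2 * (c * S) := by
                rw [mul_pow, mul_pow, mul_pow, sq_abs,
                  Real.sq_sqrt hc.1.le, Real.sq_sqrt hSnn]
        rw [hCdef, div_div, div_le_iff₀ (mul_pos (mul_pos (pow_pos hEMpos 2) hSpos2) hc.1)]
        nlinarith
      -- divergence of the integral of C/x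
      set U : ℝ := ∫ x in Set.Ioo (0:ℝ) 1, (u' x)^2 with hUdef
      have hkey : ∀ ε ∈ Set.Ioo (0:ℝ) δ, C * (Real.log δ - Real.log ε) ≤ U := by
        intro ε hε
        have hεδ : ε < δ := hε.2
        have hsub : Set.Ioo ε δ ⊆ Set.Ioo (0:ℝ) 1 :=
          Set.Ioo_subset_Ioo hε.1.le hδ1.le
        have hc1 : IntegrableOn (fun x => C * (1/x)) (Set.Ioo ε δ) := by
          apply (ContinuousOn.integrableOn_Icc ?_).mono_set Set.Ioo_subset_Icc_self
          apply continuousOn_const.mul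
          apply continuousOn_const.div continuousOn_id
          intro x hx
          exact ne_of_gt (lt_of_lt_of_le hε.1 hx.1)
        have h1 : ∫ x in Set.Ioo ε δ, C * (1/x) ≤ ∫ x in Set.Ioo ε δ, (u' x)^2 := by
          apply setIntegral_mono_on hc1 (hu.deriv_sq_int.mono_set hsub) measurableSet_Ioo
          intro x hx
          have h := hCb x ⟨lt_trans hε.1 hx.1, hx.2.le⟩
          calc C * (1/x) = C/x := by ring
            _ ≤ _ := h
        have h2 : ∫ x in Set.Ioo ε δ, C * (1/x) = C * (Real.log δ - Real.log ε) := by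
          rw [integral_const_mul]
          congr 1
          rw [← integral_Ioc_eq_integral_Ioo, ← intervalIntegral.integral_of_le hεδ.le,
            integral_one_div, Real.log_div (ne_of_gt hδ0) (ne_of_gt hε.1)]
          intro hmem
          rw [Set.mem_uIcc] at hmem
          rcases hmem with h | h
          · exact absurd h.1 (not_le.2 hε.1)
          · exact absurd h.1 (not_le.2 (lt_trans hε.1 hεδ))
        have h3 : ∫ x in Set.Ioo ε δ, (u' x)^2 ≤ U := by
          apply setIntegral_mono_set hu.deriv_sq_int
            (Eventually.of_forall fun x => sq_nonneg _)
            (HasSubset.Subset.eventuallyLE hsub)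
        linarith
      -- pick ε small enough for a contradiction
      set ε : ℝ := min (δ/2) (Real.exp (Real.log δ - U/C - 1)) with hεdef
      have hε0 : 0 < ε := lt_min (by linarith) (Real.exp_pos _)
      have hεδ : ε < δ := lt_of_le_of_lt (min_le_left _ _) (by linarith)
      have hlog : Real.log ε ≤ Real.log δ - U/C - 1 := by
        calc Real.log ε ≤ Real.log (Real.exp (Real.log δ - U/C - 1)) :=
              Real.log_le_log hε0 (min_le_right _ _)
          _ = _ := Real.log_exp _
      have hk := hkey ε ⟨hε0, hεδ⟩
      have hUC : C * (U/C + 1) = U + C := by field_simp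
      nlinarith [mul_le_mul_of_nonneg_left (by linarith : U/C + 1 ≤ Real.log δ - Real.log ε) hC.le]
  -- conclude
  have hcong : (∫ x in Set.Ioo (0:ℝ) 1, v x * (sigW a b x * w x) * (1 / sigW a b x))
      = ∫ x in Set.Ioo (0:ℝ) 1, v x * w x := by
    apply setIntegral_congr_fun measurableSet_Ioo
    intro x hx
    have h := (hSpos x hx).ne'
    field_simp
  constructor
  · rw [hcong]
    linear_combination main + (v 1) * hbc
  · nlinarith [sq_nonneg (v 1)]
end

section
/- Let E : [0,∞) → [0,∞) be a nonincreasing function and suppose there is a constant M > 0 such that ∫_t^∞ E(s) ds ≤ M E(t) for all t ∈ [0,∞) (in particular E is integrable on every half-line [t,∞)). Then E(t) ≤ E(0) e^{1 − t/M} for all t ∈ [0,∞). -/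
open MeasureTheory Set Filter Topology

/-- If `E : [0,∞) → [0,∞)` is nonincreasing, integrable on half-lines, and
`∫_t^∞ E ≤ M E(t)` for all `t ≥ 0`, then `E(t) ≤ E(0) e^{1 - t/M}`. -/
theorem stmt19 (E : ℝ → ℝ) (M : ℝ) (hM : 0 < M)
    (hnonneg : ∀ t : ℝ, 0 ≤ t → 0 ≤ E t)
    (hmono : AntitoneOn E (Set.Ici 0))
    (hint : IntegrableOn E (Set.Ioi (0:ℝ)))
    (h : ∀ t : ℝ, 0 ≤ t → ∫ s in Set.Ioi t, E s ≤ M * E t) :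
    ∀ t : ℝ, 0 ≤ t → E t ≤ E 0 * Real.exp (1 - t / M) := by
  set F : ℝ → ℝ := fun t => ∫ s in Set.Ioi t, E s with hF
  have hFint : ∀ t : ℝ, 0 ≤ t → IntegrableOn E (Set.Ioi t) := fun t ht =>
    hint.mono_set (Set.Ioi_subset_Ioi ht)
  have hFnonneg : ∀ t : ℝ, 0 ≤ t → 0 ≤ F t := fun t ht =>
    setIntegral_nonneg measurableSet_Ioi (fun x hx => hnonneg x (ht.trans (le_of_lt hx)))
  have hsplit : ∀ a b : ℝ, 0 ≤ a → a ≤ b → F a = (∫ s in Set.Ioc a b, E s) + F b := by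
    intro a b ha hab
    have h1 : Set.Ioc a b ∪ Set.Ioi b = Set.Ioi a := Set.Ioc_union_Ioi_eq_Ioi hab
    have h2 : Set.Ioc a b ⊆ Set.Ioi a := by rw [← h1]; exact Set.subset_union_left
    have h3 : Set.Ioi b ⊆ Set.Ioi a := by rw [← h1]; exact Set.subset_union_right
    simp only [hF]
    rw [← h1, setIntegral_union (Set.Ioc_disjoint_Ioi le_rfl) measurableSet_Ioi
      ((hFint a ha).mono_set h2) ((hFint a ha).mono_set h3)]
  have hlower : ∀ a b : ℝ, 0 ≤ a → a ≤ b → (b - a) * E b ≤ ∫ s in Set.Ioc a b, E s := by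
    intro a b ha hab
    have hb : (0:ℝ) ≤ b := ha.trans hab
    have hc : ∫ _ in Set.Ioc a b, E b ≤ ∫ s in Set.Ioc a b, E s := by
      apply setIntegral_mono_on (integrableOn_const (by simp))
        ((hFint a ha).mono_set Set.Ioc_subset_Ioi_self) measurableSet_Ioc
      intro x hx
      exact hmono (Set.mem_Ici.2 (ha.trans (le_of_lt hx.1))) (Set.mem_Ici.2 hb) hx.2
    calc (b - a) * E b = ∫ _ in Set.Ioc a b, E b := by
          rw [setIntegral_const]
          simp [Real.volume_Ioc, ENNReal.toReal_ofReal (sub_nonneg.2 hab), hab]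
      _ ≤ _ := hc
  -- one step of the discrete Gronwall inequality
  have hstep : ∀ a b : ℝ, 0 ≤ a → a ≤ b → F b * (1 + (b - a) / M) ≤ F a := by
    intro a b ha hab
    have hb : (0:ℝ) ≤ b := ha.trans hab
    have hEb : F b / M ≤ E b := (div_le_iff₀' hM).2 (h b hb)
    have h1 : (b - a) * (F b / M) ≤ (b - a) * E b :=
      mul_le_mul_of_nonneg_left hEb (sub_nonneg.2 hab)
    have h2 := hlower a b ha hab
    have h3 := hsplit a b ha hab
    have := hFnonneg b hb
    rw [h3]
    have : F b * (1 + (b - a) / M) = (b - a) * (F b / M) + F b := by ring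
    rw [this]
    linarith
  -- iterated step
  have hiter : ∀ (s : ℝ), 0 ≤ s → ∀ n : ℕ, F (n * s) * (1 + s / M) ^ n ≤ F 0 := by
    intro s hs n
    induction n with
    | zero => simp
    | succ k ih =>
      have hk : (0:ℝ) ≤ k * s := by positivity
      have hk1 : (k:ℝ) * s ≤ (k + 1 : ℕ) * s := by
        push_cast; nlinarith
      have hstep' := hstep (k * s) ((k + 1 : ℕ) * s) hk hk1
      have hdiff : ((k + 1 : ℕ) : ℝ) * s - k * s = s := by push_cast; ring
      rw [hdiff] at hstep'
      have hpow : (0:ℝ) ≤ (1 + s / M) ^ k := by positivity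
      calc F ((k + 1 : ℕ) * s) * (1 + s / M) ^ (k + 1)
          = (F ((k + 1 : ℕ) * s) * (1 + s / M)) * (1 + s / M) ^ k := by ring
        _ ≤ F (k * s) * (1 + s / M) ^ k := mul_le_mul_of_nonneg_right hstep' hpow
        _ ≤ F 0 := ih
  -- exponential decay of F
  have hFdecay : ∀ t : ℝ, 0 ≤ t → F t ≤ F 0 * Real.exp (-(t / M)) := by
    intro t ht
    have key : F t * Real.exp (t / M) ≤ F 0 := by
      have htend : Tendsto (fun n : ℕ => F t * (1 + (t / M) / n) ^ n) atTop
          (𝓝 (F t * Real.exp (t / M))) :=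
        (Real.tendsto_one_add_div_pow_exp (t / M)).const_mul (F t)
      refine le_of_tendsto htend ?_
      filter_upwards [eventually_ge_atTop 1] with n hn
      have hn0 : (0:ℝ) < n := by exact_mod_cast hn
      have hs : (0:ℝ) ≤ t / n := by positivity
      have := hiter (t / n) hs n
      have hts : (n:ℝ) * (t / n) = t := by field_simp
      rw [hts] at this
      have : F t * (1 + (t / n) / M) ^ n ≤ F 0 := this
      have heq : (t / n) / M = (t / M) / n := by ring
      rw [heq] at this
      exact this
    calc F t = F t * Real.exp (t / M) * Real.exp (-(t / M)) := by
          rw [mul_assoc, ← Real.exp_add]; simp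
      _ ≤ F 0 * Real.exp (-(t / M)) :=
          mul_le_mul_of_nonneg_right key (Real.exp_pos _).le
  -- conclude
  intro t ht
  rcases le_or_gt t M with htM | htM
  · have hE0 : E t ≤ E 0 := hmono (Set.mem_Ici.2 le_rfl) (Set.mem_Ici.2 ht) ht
    have h1 : (1:ℝ) ≤ Real.exp (1 - t / M) := by
      have : t / M ≤ 1 := (div_le_one hM).2 htM
      exact Real.one_le_exp (by linarith)
    nlinarith [hnonneg 0 le_rfl]
  · have htM0 : (0:ℝ) ≤ t - M := by linarith
    have h1 : M * E t ≤ ∫ s in Set.Ioc (t - M) t, E s := by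
      have := hlower (t - M) t htM0 (by linarith)
      simpa using this
    have h2 : (∫ s in Set.Ioc (t - M) t, E s) ≤ F (t - M) := by
      have h3 := hsplit (t - M) t htM0 (by linarith)
      have := hFnonneg t ht
      linarith
    have h4 := hFdecay (t - M) htM0
    have h5 : F 0 ≤ M * E 0 := h 0 le_rfl
    have heq : -((t - M) / M) = 1 - t / M := by field_simp; ring
    rw [heq] at h4
    have hexp : (0:ℝ) < Real.exp (1 - t / M) := Real.exp_pos _
    have : M * E t ≤ M * E 0 * Real.exp (1 - t / M) := by
      calc M * E t ≤ F (t - M) := h1.trans h2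
        _ ≤ F 0 * Real.exp (1 - t / M) := h4
        _ ≤ M * E 0 * Real.exp (1 - t / M) :=
            mul_le_mul_of_nonneg_right h5 hexp.le
    have := (mul_le_mul_iff_right₀ hM).1 (by linarith : M * E t ≤ M * (E 0 * Real.exp (1 - t / M)))
    exact this
end
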